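/- Let T be a consistent set of clauses, A a finite set of ground atoms, and D a ground atom. If there exists a minimal ABox repair A' of A ∪ {D} w.r.t. T with D ∈ A', then A' is a minimal instance insertion of D into A: D ∈ A', A' \ {D} ⊆ A, T ∪ A' is consistent, and there is no A'' with D ∈ A'', (A' \ {D}) ⊊ (A'' \ {D}) ⊆ A, and T ∪ A'' consistent. -/
import Mathlib


/-- A clause `H ← B`: head and body are finite sets of ground atoms. -/
structure Clause (α : Type) where
  head : Finset α
  body : Finset α
deriving DecidableEq

/-- An interpretation (a set of ground atoms) satisfies the clause `H ← B`. -/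
def satClause {α : Type} (I : Set α) (C : Clause α) : Prop :=
  (∀ b ∈ C.body, b ∈ I) → ∃ h ∈ C.head, h ∈ I

/-- An interpretation satisfies a set of clauses. -/
def satSet {α : Type} (I : Set α) (N : Set (Clause α)) : Prop :=
  ∀ C ∈ N, satClause I C

/-- `T ∪ A ⊨ D`: every model of `T` containing all atoms of `A` satisfies `D`. -/
def entails {α : Type} (T : Set (Clause α)) (A : Set α) (D : α) : Prop :=
  ∀ I : Set α, satSet I T → A ⊆ I → D ∈ I

/-- `T ∪ A` is consistent: some model of `T` contains all atoms of `A`. -/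
def consistentWith {α : Type} (T : Set (Clause α)) (A : Set α) : Prop :=
  ∃ I : Set α, satSet I T ∧ A ⊆ I

variable {V : Type} [DecidableEq V]

/-- `A'` is a minimal ABox repair of `A` w.r.t. `T`: a subset of `A`
consistent with `T` and maximal with this property. -/
def isRepair (T : Set (Clause V)) (A A' : Finset V) : Prop :=
  A' ⊆ A ∧ consistentWith T ↑A' ∧
    ∀ A'' : Finset V, A' ⊂ A'' → A'' ⊆ A → ¬ consistentWith T ↑A''

/-- if `A'` is a minimal ABox repair of `A ∪ {D}` w.r.t. `T` with
`D ∈ A'`, then `A'` is a minimal instance insertion of `D` into `A`. -/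
theorem repair_is_insertion (T : Set (Clause V))
    (hT : ∃ I : Set V, satSet I T) (A : Finset V) (D : V) (hD : D ∉ A)
    (A' : Finset V) (hrep : isRepair T (insert D A) A') (hDA' : D ∈ A') :
    D ∈ A' ∧ A' \ {D} ⊆ A ∧ consistentWith T ↑A' ∧
      ∀ A'' : Finset V, D ∈ A'' → A' \ {D} ⊂ A'' \ {D} → A'' \ {D} ⊆ A →
        ¬ consistentWith T ↑A'' := by
  obtain ⟨hsub, hcons, hmax⟩ := hrep
  refine ⟨hDA', ?_, hcons, ?_⟩
  · intro x hx
    simp only [Finset.mem_sdiff, Finset.mem_singleton] at hx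
    have := hsub hx.1
    simp only [Finset.mem_insert] at this
    tauto
  · intro A'' hDA'' hlt hsubA
    apply hmax A''
    · constructor
      · intro x hx
        by_cases hxD : x = D
        · subst hxD; exact hDA''
        · have : x ∈ A'' \ {D} := hlt.1 (by simp [Finset.mem_sdiff, hx, hxD])
          exact (Finset.mem_sdiff.mp this).1
      · intro hc
        obtain ⟨x, hx1, hx2⟩ := Finset.exists_of_ssubset hlt
        exact hx2 (Finset.mem_sdiff.mpr ⟨hc (Finset.mem_sdiff.mp hx1).1,
          (Finset.mem_sdiff.mp hx1).2⟩)
    · intro x hx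
      by_cases hxD : x = D
      · simp [hxD]
      · exact Finset.mem_insert_of_mem (hsubA (by simp [Finset.mem_sdiff, hx, hxD]))
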